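/- Let X = {x_1,...,x_n}, Y = {y_1,...,y_n} ⊂ Z^d, let D = D_m(X,Y) = min_{π∈S_n} max_j |x_j − y_{π(j)}|, and let π_0 be a permutation achieving D which, among all such minimizers, also minimizes the number N(π) of indices j with |x_j − y_{π(j)}| = D. Fix j_0 with |x_{j_0} − y_{π_0(j_0)}| = D. Define the cluster C as the set of pairs (x_z, y_{π_0(z)}) such that either |x_{j_0} − y_{π_0(z)}| < D or there is a chain of distinct pairs (x_{a_1}, y_{π_0(a_1)}),...,(x_{a_m}, y_{π_0(a_m)}) with j_0, z ∉ {a_1,...,a_m}, |x_{j_0} − y_{π_0(a_1)}| < D, |x_{a_k} − y_{π_0(a_{k+1})}| < D for 1 ≤ k ≤ m−1, and |x_{a_m} − y_{π_0(z)}| < D. Then (x_{j_0}, y_{π_0(j_0)}) ∉ C. -/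

import Mathlib

open Finset
open scoped Classical

noncomputable def ed {d : ℕ} (x y : Fin d → ℤ) : ℝ :=
  Real.sqrt (∑ i, ((x i : ℝ) - (y i : ℝ)) ^ 2)

noncomputable def Dm {d n : ℕ} [NeZero n] (x y : Fin n → Fin d → ℤ) : ℝ :=
  Finset.univ.inf' Finset.univ_nonempty fun π : Equiv.Perm (Fin n) =>
    Finset.univ.sup' Finset.univ_nonempty fun j => ed (x j) (y (π j))

/-- `(x z, y (π₀ z))` belongs to the cluster `𝒞`: either it is directly within
distance `< D` of `x j₀`, or it is reachable from `x j₀` by a chain of distinct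
pairs with consecutive distances `< D`. -/
def inCluster {d n : ℕ} (x y : Fin n → Fin d → ℤ) (π₀ : Equiv.Perm (Fin n))
    (D : ℝ) (j₀ z : Fin n) : Prop :=
  ed (x j₀) (y (π₀ z)) < D ∨
  ∃ (m : ℕ) (a : Fin (m + 1) → Fin n), Function.Injective a ∧
    (∀ k, a k ≠ j₀ ∧ a k ≠ z) ∧
    ed (x j₀) (y (π₀ (a 0))) < D ∧
    (∀ k : Fin m, ed (x (a k.castSucc)) (y (π₀ (a k.succ))) < D) ∧
    ed (x (a (Fin.last m))) (y (π₀ z)) < D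

theorem cluster_not_contain_j0 {d n : ℕ} [NeZero n] (x y : Fin n → Fin d → ℤ)
    (hx : Function.Injective x) (hy : Function.Injective y)
    (π₀ : Equiv.Perm (Fin n))
    (hπ₀D : (Finset.univ.sup' Finset.univ_nonempty fun j => ed (x j) (y (π₀ j)))
      = Dm x y)
    (hπ₀N : ∀ π : Equiv.Perm (Fin n),
      (Finset.univ.sup' Finset.univ_nonempty fun j => ed (x j) (y (π j))) = Dm x y →
      (Finset.univ.filter fun j => ed (x j) (y (π₀ j)) = Dm x y).card ≤
        (Finset.univ.filter fun j => ed (x j) (y (π j)) = Dm x y).card)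
    (j₀ : Fin n) (hj₀ : ed (x j₀) (y (π₀ j₀)) = Dm x y) :
    ¬ inCluster x y π₀ (Dm x y) j₀ j₀ := by
  set D := Dm x y with hD
  have hle : ∀ j, ed (x j) (y (π₀ j)) ≤ D := by
    intro j
    rw [← hπ₀D]
    exact Finset.le_sup' (fun j => ed (x j) (y (π₀ j))) (Finset.mem_univ j)
  rintro (h | ⟨m, a, ha_inj, ha_ne, h0, hchain, hlast⟩)
  · exact absurd hj₀ (ne_of_lt h)
  -- build the embedding b : Fin (m+2) ↪ Fin n, b 0 = j₀, b (k.succ) = a k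
  set b : Fin (m + 2) → Fin n := Fin.cases j₀ a with hb
  have hb0 : b 0 = j₀ := rfl
  have hbs : ∀ k : Fin (m + 1), b k.succ = a k := fun k => rfl
  have hb_inj : Function.Injective b := by
    intro i j hij
    induction i using Fin.cases with
    | zero =>
      induction j using Fin.cases with
      | zero => rfl
      | succ j => exact absurd hij.symm (ha_ne j).1
    | succ i =>
      induction j using Fin.cases with
      | zero => exact absurd hij (ha_ne i).1
      | succ j => exact congrArg Fin.succ (ha_inj hij)
  set ι : Fin (m + 2) ↪ Fin n := ⟨b, hb_inj⟩ with hι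
  set σ : Equiv.Perm (Fin n) := (finRotate (m + 2)).viaEmbedding ι with hσ
  set π : Equiv.Perm (Fin n) := σ.trans π₀ with hπ
  have hπ_apply : ∀ j, π j = π₀ (σ j) := fun j => rfl
  -- values of σ
  have hσb : ∀ i : Fin (m + 2), σ (b i) = b (i + 1) := by
    intro i
    have := Equiv.Perm.viaEmbedding_apply (finRotate (m + 2)) ι i
    simp only [finRotate_succ_apply] at this
    exact this
  have hσ_fix : ∀ j, j ≠ j₀ → (∀ k, a k ≠ j) → σ j = j := by
    intro j hj hk
    apply Equiv.Perm.viaEmbedding_apply_of_notMem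
    rintro ⟨i, rfl⟩
    induction i using Fin.cases with
    | zero => exact hj rfl
    | succ i => exact hk i rfl
  -- each point of π has ed < D on the cycle, ≤ D elsewhere
  have key : ∀ j, ed (x j) (y (π j)) ≤ D ∧
      (ed (x j) (y (π j)) = D → (j ≠ j₀ ∧ π j = π₀ j)) := by
    intro j
    by_cases hj : j = j₀
    · subst hj
      have h1 : σ j = a 0 := by
        have := hσb 0
        rw [hb0] at this
        rw [this]
        have : (0 : Fin (m + 2)) + 1 = (0 : Fin (m+1)).succ := by
          ext; simp
        rw [this, hbs]
      rw [hπ_apply, h1]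
      exact ⟨le_of_lt h0, fun h => absurd h (ne_of_lt h0)⟩
    by_cases hja : ∃ k, a k = j
    · obtain ⟨k, rfl⟩ := hja
      induction k using Fin.lastCases with
      | last =>
        have h1 : σ (a (Fin.last m)) = j₀ := by
          have := hσb (Fin.last m).succ
          rw [hbs] at this
          rw [this]
          have h2 : ((Fin.last m).succ : Fin (m + 2)) + 1 = (0 : Fin (m + 2)) := by
            ext; simp [Fin.add_def, Fin.last]
          rw [h2, hb0]
        rw [hπ_apply, h1]
        exact ⟨le_of_lt hlast, fun h => absurd h (ne_of_lt hlast)⟩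
      | cast k =>
        have h1 : σ (a k.castSucc) = a k.succ := by
          have := hσb k.castSucc.succ
          rw [hbs] at this
          rw [this]
          have h2 : (k.castSucc.succ : Fin (m + 2)) + 1 = (k.succ : Fin (m+1)).succ := by
            have hk := k.isLt
            ext
            simp only [Fin.add_def, Fin.val_succ, Fin.coe_castSucc, Fin.val_one]
            rw [Nat.mod_eq_of_lt (by omega)]
          rw [h2, hbs]
        rw [hπ_apply, h1]
        exact ⟨le_of_lt (hchain k), fun h => absurd h (ne_of_lt (hchain k))⟩
    · push_neg at hja
      have h1 : σ j = j := hσ_fix j hj hja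
      rw [hπ_apply, h1]
      exact ⟨hle j, fun _ => ⟨hj, rfl⟩⟩
  -- sup' for π equals D
  have hsup : (Finset.univ.sup' Finset.univ_nonempty fun j => ed (x j) (y (π j))) = D := by
    apply le_antisymm
    · apply Finset.sup'_le
      intro j _
      exact (key j).1
    · rw [hD]
      exact Finset.inf'_le _ (Finset.mem_univ π)
  -- contradiction with minimality of N
  have hcard := hπ₀N π hsup
  have hsubset : (Finset.univ.filter fun j => ed (x j) (y (π j)) = D) ⊆
      (Finset.univ.filter fun j => ed (x j) (y (π₀ j)) = D).erase j₀ := by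
    intro j hjmem
    rw [Finset.mem_filter] at hjmem
    obtain ⟨hne, heq⟩ := (key j).2 hjmem.2
    rw [Finset.mem_erase, Finset.mem_filter]
    exact ⟨hne, Finset.mem_univ j, by rw [← heq]; exact hjmem.2⟩
  have hj₀mem : j₀ ∈ Finset.univ.filter fun j => ed (x j) (y (π₀ j)) = D :=
    Finset.mem_filter.mpr ⟨Finset.mem_univ j₀, hj₀⟩
  have := Finset.card_le_card hsubset
  have herase := Finset.card_erase_lt_of_mem hj₀mem
  omega
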